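/- Let (Y,Z) be a dual pair, C, D ⊆ Y weakly closed cones and B₁, B₂ ⊆ Y weakly closed convex sets containing zero. If Y is coadditive with respect to (C,D,B₁,λB₂) for all λ > 1 (i.e., B₁ ⊆ (λB₂ + C) ∩ D for all λ > 1), then Z is additive with respect to (C°,D°,B₁°,B₂°), i.e., (B₂° ∩ C°) + D° ⊆ B₁°. -/
import Mathlib


open Pointwise

/-- The one-sided polar of a subset `A ⊆ Y` in the dual pair `(Y,Z)` given by `B`. -/
def onesidedPolar {Y Z : Type*} [AddCommGroup Y] [Module ℝ Y] [AddCommGroup Z] [Module ℝ Z]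
    (B : Y →ₗ[ℝ] Z →ₗ[ℝ] ℝ) (A : Set Y) : Set Z :=
  {z : Z | ∀ a ∈ A, B a z ≤ 1}

/-- If `Y` is coadditive w.r.t. `(C,D,B₁,λB₂)` for all `λ > 1`, then `Z`
is additive w.r.t. `(C°,D°,B₁°,B₂°)`, i.e. `(B₂° ∩ C°) + D° ⊆ B₁°`. -/
theorem additive_polars_of_coadditive_dilations
    {Y Z : Type*} [AddCommGroup Y] [Module ℝ Y] [AddCommGroup Z] [Module ℝ Z]
    (B : Y →ₗ[ℝ] Z →ₗ[ℝ] ℝ)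
    (hsepY : ∀ y : Y, (∀ z : Z, B y z = 0) → y = 0)
    (hsepZ : ∀ z : Z, (∀ y : Y, B y z = 0) → z = 0)
    (C D B₁ B₂ : Set Y)
    (hCcl : IsClosed (X := WeakBilin B) C) (hCne : C.Nonempty)
    (hCadd : C + C ⊆ C) (hCsmul : ∀ l : ℝ, 0 ≤ l → l • C ⊆ C)
    (hDcl : IsClosed (X := WeakBilin B) D) (hDne : D.Nonempty)
    (hDadd : D + D ⊆ D) (hDsmul : ∀ l : ℝ, 0 ≤ l → l • D ⊆ D)
    (hB₁cl : IsClosed (X := WeakBilin B) B₁) (hB₁conv : Convex ℝ B₁) (hB₁0 : (0 : Y) ∈ B₁)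
    (hB₂cl : IsClosed (X := WeakBilin B) B₂) (hB₂conv : Convex ℝ B₂) (hB₂0 : (0 : Y) ∈ B₂)
    (hcoadd : ∀ l : ℝ, 1 < l → B₁ ⊆ ((l • B₂) + C) ∩ D) :
    (onesidedPolar B B₂ ∩ onesidedPolar B C) + onesidedPolar B D ⊆ onesidedPolar B B₁ := by

  -- For a cone `K` and `z ∈ K°`, pairings are ≤ 0.
  have cone_nonpos : ∀ (K : Set Y), (∀ l : ℝ, 0 ≤ l → l • K ⊆ K) →
      ∀ z ∈ onesidedPolar B K, ∀ k ∈ K, B k z ≤ 0 := by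
    intro K hK z hz k hk
    by_contra h
    push_neg at h
    have h2 : (2 / B k z) • k ∈ K := hK _ (by positivity) ⟨k, hk, rfl⟩
    have := hz _ h2
    rw [map_smul] at this
    simp only [LinearMap.smul_apply, smul_eq_mul] at this
    rw [div_mul_cancel₀ _ (ne_of_gt h)] at this
    linarith
  rintro z ⟨z₁, hz₁, z₂, hz₂, rfl⟩
  intro y hy
  -- show B y (z₁ + z₂) ≤ l for all l > 1
  have key : ∀ l : ℝ, 1 < l → B y (z₁ + z₂) ≤ l := by
    intro l hl
    obtain ⟨⟨w, ⟨b, hb, rfl⟩, c, hc, rfl⟩, hyD⟩ := hcoadd l hl hy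
    have h1 : B b z₁ ≤ 1 := hz₁.1 b hb
    have h2 : B c z₁ ≤ 0 := cone_nonpos C hCsmul z₁ hz₁.2 c hc
    have h3 : B (l • b + c) z₂ ≤ 0 :=
      cone_nonpos D hDsmul z₂ hz₂ _ hyD
    simp only [map_add, map_smul, LinearMap.add_apply, LinearMap.smul_apply, smul_eq_mul] at h3 ⊢
    nlinarith
  by_contra h
  push_neg at h
  have := key ((B y (z₁ + z₂) + 1) / 2) (by linarith)
  linarith
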